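/- For every n ≥ 5 with n ≡ 2 (mod 3), the decycling number of the square of the n-cycle equals (n+1)/3 + 1: ∇(Cₙ²) = ⌈(n+1)/3⌉ + 1. -/

import Mathlib

open SimpleGraph

/-- `S` is a decycling set of `G` if the subgraph of `G` induced on the complement of `S`
is acyclic. -/
def SimpleGraph.IsDecyclingSet {V : Type*} (G : SimpleGraph V) (S : Set V) : Prop :=
  (G.induce Sᶜ).IsAcyclic

/-- The decycling number `∇(G)` of `G`: the minimum cardinality of a decycling set of `G`. -/
noncomputable def SimpleGraph.decyclingNumber {V : Type*} (G : SimpleGraph V) : ℕ :=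
  sInf {k | ∃ S : Set V, G.IsDecyclingSet S ∧ S.ncard = k}

/-- The square `Cₙ²` of the `n`-cycle: vertex set `ZMod n`, with `i` adjacent to `j` iff
`i ≠ j` and `i - j ≡ ±1` or `±2 (mod n)`. -/
def cycleSquare (n : ℕ) : SimpleGraph (ZMod n) where
  Adj i j := i ≠ j ∧ (i - j = 1 ∨ j - i = 1 ∨ i - j = 2 ∨ j - i = 2)
  symm := ⟨by intro i j ⟨h, hd⟩; exact ⟨h.symm, by tauto⟩⟩
  loopless := ⟨by intro i ⟨h, _⟩; exact h rfl⟩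

/-!
`Cₙ²` is 4-regular with `2n` edges. If `S` is a decycling set with `k` vertices and `e(S)`
edges inside it, the forest `Cₙ² - S` has at most `n - k - 1` edges while `S` meets at most
`4k - e(S)` edges, so `n + 1 + e(S) ≤ 3k`. If `S` were independent, its translates `S`, `S + 1`,
`S + 2` would be pairwise disjoint and `3k ≤ n`; hence `e(S) ≥ 1`, `3k ≥ n + 2` and
`k ≥ (n + 1)/3 + 1`.

Conversely, for `n = 3m + 2` the multiples of `3` below `n` together with `n - 1` form a
decycling set of size `m + 2`: the remaining vertices `1, 2, 4, 5, …, 3m - 2, 3m - 1` induce a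
path, which `x ↦ 2⌊x/3⌋ + (x mod 3) - 1` maps injectively into the Hasse diagram of `ℕ`.
-/

open Finset

namespace SimpleGraph

variable {V : Type*} {G : SimpleGraph V}

theorem isAcyclic_hasse (α : Type*) [LinearOrder α] : (hasse α).IsAcyclic := by
  refine isAcyclic_iff_forall_adj_isBridge.mpr fun a b hab ↦ ?_
  wlog hlt : a ⋖ b generalizing a b
  · rw [Sym2.eq_swap]
    exact this b a hab.symm ((hasse_adj.mp hab).resolve_left hlt)
  -- A walk from `a` to `b` leaves `{x | x ≤ a}` somewhere, and only along `s(a, b)`.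
  refine isBridge_iff_forall_walk_mem_edges.mpr fun p ↦ ?_
  obtain ⟨d, hd, hda, hdb⟩ := p.exists_boundary_dart {x | x ≤ a} le_rfl (not_le.mpr hlt.lt)
  have hcov : d.fst ⋖ d.snd :=
    (hasse_adj.mp d.adj).resolve_right fun h ↦ hdb (h.lt.le.trans hda)
  have hfst : d.fst = a := le_antisymm hda (not_lt.mp fun h ↦ hcov.2 h (not_le.mp hdb))
  have hsnd : d.snd = b := by
    subst hfst
    exact le_antisymm (not_lt.mp fun h ↦ hcov.2 hlt.lt h) (not_lt.mp fun h ↦ hlt.2 hcov.lt h)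
  have hedge : d.edge = s(a, b) := by rw [← hfst, ← hsnd]; rfl
  exact hedge ▸ List.mem_map_of_mem hd

theorem IsAcyclic.card_edgeFinset_add_one_le [Fintype V] [Nonempty V] [Fintype G.edgeSet]
    (hG : G.IsAcyclic) : #G.edgeFinset + 1 ≤ Fintype.card V := by
  classical
  obtain ⟨T, hGT, -, hT⟩ := connected_top.exists_isTree_le_of_le_of_isAcyclic le_top hG
  rw [← hT.card_edgeFinset]
  gcongr

theorem sum_degree_eq_sum_card_filter_mem [Fintype V] [DecidableEq V] [DecidableRel G.Adj]
    (S : Finset V) : ∑ v ∈ S, G.degree v = ∑ e ∈ G.edgeFinset, #{v ∈ S | v ∈ e} := by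
  simp_rw [← card_incidenceFinset_eq_degree, incidenceFinset_eq_filter, card_filter]
  exact sum_comm

theorem sum_degree_add_card_edgeFinset_induce_compl [Fintype V] [DecidableEq V]
    [DecidableRel G.Adj] (S : Finset V) :
    ∑ v ∈ S, G.degree v + #(G.induce (↑Sᶜ : Set V)).edgeFinset =
      #G.edgeFinset + #(G.induce (S : Set V)).edgeFinset := by
  rw [sum_degree_eq_sum_card_filter_mem, ← card_filter_edgeFinset_toFinset_subset,
    ← card_filter_edgeFinset_toFinset_subset, card_filter _ G.edgeFinset,
    card_filter _ G.edgeFinset, ← sum_add_distrib, card_eq_sum_ones G.edgeFinset,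
    ← sum_add_distrib]
  -- Edge by edge: `#(e ∩ S) + [e ⊆ Sᶜ] = 1 + [e ⊆ S]`.
  refine sum_congr rfl fun e he ↦ ?_
  induction e with
  | _ a b =>
  have hab : a ≠ b := G.ne_of_adj (mem_edgeFinset.mp he)
  by_cases ha : a ∈ S <;> by_cases hb : b ∈ S <;>
    simp [Sym2.toFinset_mk_eq, insert_subset_iff, ha, hb, filter_or, filter_eq', card_pair hab]

theorem isIndepSet_of_card_edgeFinset_induce_eq_zero [Fintype V] [DecidableEq V]
    [DecidableRel G.Adj] {S : Finset V} (h : #(G.induce (S : Set V)).edgeFinset = 0) :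
    G.IsIndepSet S := by
  intro a ha b hb _ hadj
  have hedge : s(⟨a, ha⟩, ⟨b, hb⟩) ∈ (G.induce (S : Set V)).edgeFinset := by
    simpa using hadj
  simp_all

theorem isDecyclingSet_univ (G : SimpleGraph V) : G.IsDecyclingSet Set.univ := by
  simp [IsDecyclingSet, IsAcyclic.of_subsingleton]

theorem IsDecyclingSet.decyclingNumber_le {S : Set V} (hS : G.IsDecyclingSet S) :
    G.decyclingNumber ≤ S.ncard :=
  Nat.sInf_le ⟨S, hS, rfl⟩

theorem le_decyclingNumber {k : ℕ} (h : ∀ S, G.IsDecyclingSet S → k ≤ S.ncard) :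
    k ≤ G.decyclingNumber :=
  le_csInf ⟨_, _, G.isDecyclingSet_univ, rfl⟩ fun _ ⟨S, hS, hk⟩ ↦ hk ▸ h S hS

theorem IsDecyclingSet.card_edgeFinset_add_le [Fintype V] [DecidableEq V] [DecidableRel G.Adj]
    {S : Finset V} (hS : G.IsDecyclingSet S) (hSV : #S < Fintype.card V) :
    #G.edgeFinset + #(G.induce (S : Set V)).edgeFinset + #S + 1 ≤
      Fintype.card V + ∑ v ∈ S, G.degree v := by
  rw [IsDecyclingSet, ← coe_compl] at hS
  have hcard : Fintype.card (↑Sᶜ : Set V) = Fintype.card V - #S := by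
    simp only [coe_sort_coe, Fintype.card_coe, card_compl]
  have : Nonempty (↑Sᶜ : Set V) := by
    rw [← Fintype.card_pos_iff, hcard]
    omega
  have hforest := hS.card_edgeFinset_add_one_le
  have hcount := G.sum_degree_add_card_edgeFinset_induce_compl S
  omega

end SimpleGraph

section cycleSquare

variable {n : ℕ}

instance : DecidableRel (cycleSquare n).Adj := fun _ _ ↦ inferInstanceAs (Decidable (_ ∧ _))

theorem ZMod.natCast_ne_zero_of_lt {k : ℕ} (hk : k ≠ 0) (hkn : k < n) : (k : ZMod n) ≠ 0 := by
  rwa [← ZMod.val_ne_zero, ZMod.val_natCast_of_lt hkn]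

theorem cycleSquare_adj_add_one (hn : 2 ≤ n) (v : ZMod n) : (cycleSquare n).Adj v (v + 1) :=
  ⟨fun h ↦ ZMod.natCast_ne_zero_of_lt (k := 1) one_ne_zero hn (by simpa using h),
    Or.inr (Or.inl (by ring))⟩

theorem cycleSquare_adj_add_two (hn : 3 ≤ n) (v : ZMod n) : (cycleSquare n).Adj v (v + 2) :=
  ⟨fun h ↦ ZMod.natCast_ne_zero_of_lt (k := 2) two_ne_zero hn (by simpa using h),
    Or.inr (Or.inr (Or.inr (by ring)))⟩

theorem cycleSquare_adj_iff (hn : 3 ≤ n) {v w : ZMod n} :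
    (cycleSquare n).Adj v w ↔ w = v + 1 ∨ w = v + 2 ∨ v = w + 1 ∨ v = w + 2 := by
  refine ⟨fun ⟨_, h⟩ ↦ ?_, ?_⟩
  · simp only [sub_eq_iff_eq_add'] at h
    tauto
  · rintro (rfl | rfl | rfl | rfl)
    · exact cycleSquare_adj_add_one (by omega) v
    · exact cycleSquare_adj_add_two hn v
    · exact (cycleSquare_adj_add_one (by omega) w).symm
    · exact (cycleSquare_adj_add_two hn w).symm

theorem cycleSquare_degree [NeZero n] (hn : 5 ≤ n) (v : ZMod n) :
    (cycleSquare n).degree v = 4 := by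
  have hnbr : (cycleSquare n).neighborFinset v =
      ({1, 2, -1, -2} : Finset ℤ).image fun d : ℤ ↦ v + d := by
    ext w
    simp only [mem_neighborFinset, cycleSquare_adj_iff (by omega : 3 ≤ n), mem_image, mem_insert,
      mem_singleton, exists_eq_or_imp, exists_eq_left]
    push_cast
    simp only [← sub_eq_add_neg, sub_eq_iff_eq_add, eq_comm (a := w)]
  rw [← card_neighborFinset_eq_degree, hnbr, card_image_of_injOn]
  · rfl
  intro a ha b hb hab
  simp only [coe_insert, coe_singleton, Set.mem_insert_iff, Set.mem_singleton_iff] at ha hb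
  have hdvd := (ZMod.intCast_eq_intCast_iff_dvd_sub a b n).mp (add_right_injective v hab)
  have := Int.eq_zero_of_abs_lt_dvd hdvd (by rw [abs_lt]; omega)
  omega

theorem cycleSquare_card_edgeFinset [NeZero n] (hn : 5 ≤ n) :
    #(cycleSquare n).edgeFinset = 2 * n := by
  have := (cycleSquare n).sum_degrees_eq_twice_card_edges
  simp only [cycleSquare_degree hn, sum_const, card_univ, ZMod.card, smul_eq_mul] at this
  omega

theorem cycleSquare_three_mul_card_le_of_isIndepSet [NeZero n] (hn : 3 ≤ n)
    {S : Finset (ZMod n)} (hS : (cycleSquare n).IsIndepSet S) : 3 * #S ≤ n := by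
  have hshift {s t : ZMod n} {d : ℕ} (hs : s ∈ S) (ht : t ∈ S) (hd : d < 3)
      (hst : s = t + d) : d = 0 := by
    have hadj : ¬(cycleSquare n).Adj t s := fun h ↦ hS ht hs h.ne h
    interval_cases d
    · rfl
    · exact absurd (cycleSquare_adj_add_one (by omega) t) (by simpa [hst] using hadj)
    · exact absurd (cycleSquare_adj_add_two hn t) (by simpa [hst] using hadj)
  have hinj : Set.InjOn (fun p : ZMod n × ℕ ↦ p.1 + p.2) ↑(S ×ˢ range 3) := by
    rintro ⟨s, i⟩ hsi ⟨t, j⟩ htj hst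
    simp only [coe_product, coe_range, Set.mem_prod, mem_coe, Set.mem_Iio] at hsi htj hst
    rcases le_total i j with hij | hji
    · obtain ⟨d, rfl⟩ := Nat.exists_eq_add_of_le hij
      obtain rfl := hshift (d := d) hsi.1 htj.1 (by omega)
        (by push_cast at hst; linear_combination hst)
      simp_all
    · obtain ⟨d, rfl⟩ := Nat.exists_eq_add_of_le hji
      obtain rfl := hshift (d := d) htj.1 hsi.1 (by omega)
        (by push_cast at hst; linear_combination -hst)
      simp_all
  simpa [mul_comm] using card_le_card_of_injOn _ (fun _ _ ↦ mem_univ _) hinj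

theorem cycleSquare_add_two_le_three_mul_ncard_of_isDecyclingSet (hn : 5 ≤ n)
    {S : Set (ZMod n)} (hS : (cycleSquare n).IsDecyclingSet S) : n + 2 ≤ 3 * S.ncard := by
  have : NeZero n := ⟨by omega⟩
  obtain ⟨T, rfl⟩ := S.toFinite.exists_finset_coe
  rw [Set.ncard_coe_finset]
  have hT : #T ≤ n := by simpa using card_le_univ T
  obtain hTn | hTn := hT.lt_or_eq
  · have hcount := hS.card_edgeFinset_add_le (by simpa using hTn)
    simp only [ZMod.card, cycleSquare_card_edgeFinset hn, cycleSquare_degree hn, sum_const,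
      smul_eq_mul] at hcount
    have hindep : #((cycleSquare n).induce (T : Set (ZMod n))).edgeFinset ≠ 0 := fun h ↦ by
      have := cycleSquare_three_mul_card_le_of_isIndepSet (by omega)
        (isIndepSet_of_card_edgeFinset_induce_eq_zero h)
      omega
    omega
  · omega

def cycleSquareDecyclingSet (n : ℕ) : Finset (ZMod n) :=
  (insert (n - 1) ((range ((n + 1) / 3)).image (3 * ·))).image (↑)

theorem card_cycleSquareDecyclingSet (h3 : n % 3 = 2) :
    #(cycleSquareDecyclingSet n) = (n + 1) / 3 + 1 := by
  rw [cycleSquareDecyclingSet, card_image_of_injOn, card_insert_of_notMem,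
    card_image_of_injective _ (mul_right_injective₀ three_ne_zero), card_range]
  · simp only [mem_image, mem_range, not_exists, not_and]
    omega
  intro a ha b hb hab
  simp only [coe_insert, coe_image, coe_range, Set.mem_insert_iff, Set.mem_image,
    Set.mem_Iio] at ha hb
  have hlt {c : ℕ} (hc : c = n - 1 ∨ ∃ i < (n + 1) / 3, 3 * i = c) : c < n := by omega
  simpa [ZMod.val_natCast_of_lt (hlt ha), ZMod.val_natCast_of_lt (hlt hb)] using
    congrArg ZMod.val hab

theorem mem_cycleSquareDecyclingSet_of_val (h3 : n % 3 = 2) {x : ZMod n}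
    (hx : x.val % 3 = 0 ∨ x.val = n - 1) : x ∈ cycleSquareDecyclingSet n := by
  have : NeZero n := ⟨by omega⟩
  refine mem_image.mpr ⟨x.val, ?_, ZMod.natCast_zmod_val x⟩
  have := x.val_lt
  simp only [mem_insert, mem_image, mem_range]
  rcases hx with hx | hx
  · exact Or.inr ⟨x.val / 3, by omega, by omega⟩
  · exact Or.inl hx

theorem isDecyclingSet_cycleSquareDecyclingSet (hn : 5 ≤ n) (h3 : n % 3 = 2) :
    (cycleSquare n).IsDecyclingSet (cycleSquareDecyclingSet n) := by
  have : NeZero n := ⟨by omega⟩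
  let D : Set (ZMod n) := (cycleSquareDecyclingSet n : Set (ZMod n))ᶜ
  have hval (x : D) :
      x.1.val % 3 ≠ 0 ∧ x.1.val + 2 < n := by
    have := x.1.val_lt
    have hx : ¬(x.1.val % 3 = 0 ∨ x.1.val = n - 1) :=
      fun h ↦ x.2 (mem_cycleSquareDecyclingSet_of_val h3 h)
    omega
  let g : D → ℕ :=
    fun x ↦ 2 * (x.1.val / 3) + x.1.val % 3 - 1
  have hstep {x y : D}
      (hxy : y.1 = x.1 + 1 ∨ y.1 = x.1 + 2) : g x ⋖ g y := by
    obtain ⟨hx3, hxn⟩ := hval x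
    have hy3 := (hval y).1
    have h1 : (1 : ZMod n).val = 1 := ZMod.val_one'' (by omega)
    have h2 : (2 : ZMod n).val = 2 := ZMod.val_ofNat_of_lt (by omega : 2 < n)
    have hyx : y.1.val = x.1.val + 1 ∨ y.1.val = x.1.val + 2 := by
      rcases hxy with h | h <;> rw [h, ZMod.val_add_of_lt] <;>
        simp only [h1, h2, true_or, or_true] <;> omega
    rw [Nat.covBy_iff_add_one_eq]
    simp only [g]
    omega
  let f : (cycleSquare n).induce D →g hasse ℕ :=
    ⟨g, fun {x y} hxy ↦ by
      rcases (cycleSquare_adj_iff (by omega)).mp hxy with h | h | h | h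
      · exact hasse_adj.mpr (Or.inl (hstep (Or.inl h)))
      · exact hasse_adj.mpr (Or.inl (hstep (Or.inr h)))
      · exact hasse_adj.mpr (Or.inr (hstep (Or.inl h)))
      · exact hasse_adj.mpr (Or.inr (hstep (Or.inr h)))⟩
  refine (isAcyclic_hasse ℕ).comap f fun x y hxy ↦ Subtype.ext (ZMod.val_injective n ?_)
  have hg : g x = g y := hxy
  have := (hval x).1
  have := (hval y).1
  simp only [g] at hg
  omega

end cycleSquare

/-- For every `n ≥ 5` with `n ≡ 2 (mod 3)`, `∇(Cₙ²) = (n+1)/3 + 1 = ⌈(n+1)/3⌉ + 1`. -/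
theorem decyclingNumber_cycleSquare_two_mod_three (n : ℕ) (hn : 5 ≤ n) (h3 : n % 3 = 2) :
    (cycleSquare n).decyclingNumber = ⌈((n : ℚ) + 1) / 3⌉₊ + 1 := by
  have hceil : ⌈((n : ℚ) + 1) / 3⌉₊ = (n + 1) / 3 := by
    have hdiv : ((n : ℚ) + 1) / 3 = ((n + 1) / 3 : ℕ) := by
      rw [Nat.cast_div (by omega) (by norm_num)]
      push_cast
      rfl
    rw [hdiv, Nat.ceil_natCast]
  rw [hceil]
  refine le_antisymm ?_ (le_decyclingNumber fun S hS ↦ ?_)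
  · simpa [card_cycleSquareDecyclingSet h3] using
      (isDecyclingSet_cycleSquareDecyclingSet hn h3).decyclingNumber_le
  · have := cycleSquare_add_two_le_three_mul_ncard_of_isDecyclingSet hn hS
    omega
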